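/- arXiv:1609.02196 — 3 statements merged into one kernel-verified Lean document; each statement's English description precedes it below -/
import Mathlib

section
/- Let E be a complex Banach space and let F be a norm-closed linear subspace of the continuous dual of E. Let 0 < r₀ < 1 and let φ be a map from ℂ to the continuous dual of E such that: (i) for every x ∈ E the scalar function z ↦ (φ z) x is differentiable (complex-analytic) on the open unit ball {z : |z| < 1}; (ii) the restriction of φ to the circle {z : |z| = r₀} is continuous with respect to the dual (operator) norm; and (iii) φ z ∈ F for every z with |z| = r₀. Then φ 0 ∈ F. -/
/-!
By the Cauchy integral formula, applied to each scalar function `z ↦ φ z x`,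
`φ 0 = (2πi)⁻¹ ∮_{|z| = r₀} z⁻¹ • φ z dz`, where the circle integral is a Bochner integral in the
dual, legitimate because `φ` is norm-continuous on the circle. Its integrand takes values in the
closed subspace `F`, hence so does the integral.
-/

open Metric MeasureTheory

theorem Submodule.intervalIntegral_mem {V : Type*} [NormedAddCommGroup V] [NormedSpace ℝ V]
    [CompleteSpace V] {F : Submodule ℝ V} (hF : IsClosed (F : Set V)) {f : ℝ → V}
    (hf : ∀ t, f t ∈ F) {a b : ℝ} {μ : Measure ℝ} : ∫ t in a..b, f t ∂μ ∈ F := by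
  have : CompleteSpace F := hF.completeSpace_coe
  have hcomm := F.subtypeₗᵢ.intervalIntegral_comp_comm (a := a) (b := b) (μ := μ)
    fun t => (⟨f t, hf t⟩ : F)
  simp only [coe_subtypeₗᵢ, coe_subtype] at hcomm
  exact hcomm ▸ coe_mem _

theorem Submodule.circleIntegral_mem {V : Type*} [NormedAddCommGroup V] [NormedSpace ℂ V]
    [CompleteSpace V] {F : Submodule ℂ V} (hF : IsClosed (F : Set V)) {f : ℂ → V} {c : ℂ}
    {R : ℝ} (hf : ∀ z ∈ sphere c |R|, f z ∈ F) : (∮ z in C(c, R), f z) ∈ F :=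
  (F.restrictScalars ℝ).intervalIntegral_mem hF fun θ =>
    F.smul_mem _ (hf _ (circleMap_mem_sphere' c R θ))

section CauchyFormula

variable {E G : Type*} [NormedAddCommGroup E] [NormedSpace ℂ E] [NormedAddCommGroup G]
  [NormedSpace ℂ G]

theorem ContinuousLinearMap.circleIntegral_apply {φ : ℂ → E →L[ℂ] G} {c : ℂ} {R : ℝ}
    (hφ : CircleIntegrable φ c R) (x : E) :
    (∮ z in C(c, R), φ z) x = ∮ z in C(c, R), φ z x := by
  rw [circleIntegral, circleIntegral, ContinuousLinearMap.intervalIntegral_apply hφ.out x]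
  rfl

theorem ContinuousLinearMap.circleIntegral_sub_inv_smul [CompleteSpace G] {φ : ℂ → E →L[ℂ] G}
    {c w : ℂ} {R : ℝ}
    (hd : ∀ x, DiffContOnCl ℂ (fun z => φ z x) (ball c R)) (hc : ContinuousOn φ (sphere c R))
    (hw : w ∈ ball c R) :
    (∮ z in C(c, R), (z - w)⁻¹ • φ z) = (2 * Real.pi * Complex.I : ℂ) • φ w := by
  have hw_off : ∀ z ∈ sphere c R, z - w ≠ 0 := by
    rintro z hz hzw
    exact (mem_ball.1 hw).ne (sub_eq_zero.1 hzw ▸ mem_sphere.1 hz)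
  have hint : CircleIntegrable (fun z => (z - w)⁻¹ • φ z) c R :=
    ((continuousOn_id.sub continuousOn_const).inv₀ hw_off).smul hc
      |>.circleIntegrable (dist_nonneg.trans hw.le)
  ext x
  rw [circleIntegral_apply hint, smul_apply, ← (hd x).circleIntegral_sub_inv_smul hw]
  rfl

end CauchyFormula

theorem stmt_0_general (E : Type*) [NormedAddCommGroup E] [NormedSpace ℂ E]
    (F : Submodule ℂ (E →L[ℂ] ℂ)) (hF : IsClosed (F : Set (E →L[ℂ] ℂ)))
    (r₀ : ℝ) (hr₀ : 0 < r₀) (hr₁ : r₀ < 1)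
    (φ : ℂ → (E →L[ℂ] ℂ))
    (hanal : ∀ x : E, DifferentiableOn ℂ (fun z => φ z x) (ball (0 : ℂ) 1))
    (hcont : ContinuousOn φ (sphere (0 : ℂ) r₀))
    (hmem : ∀ z ∈ sphere (0 : ℂ) r₀, φ z ∈ F) :
    φ 0 ∈ F := by
  have hd (x : E) : DiffContOnCl ℂ (fun z => φ z x) (ball 0 r₀) :=
    (hanal x).diffContOnCl_ball (closedBall_subset_ball hr₁)
  have hcauchy := ContinuousLinearMap.circleIntegral_sub_inv_smul hd hcont (mem_ball_self hr₀)
  have hintegral_mem : (∮ z in C(0, r₀), (z - 0)⁻¹ • φ z) ∈ F :=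
    F.circleIntegral_mem hF fun z hz =>
      F.smul_mem _ (hmem z (by rwa [abs_of_pos hr₀] at hz))
  have h2πI : (2 * Real.pi * Complex.I : ℂ) ≠ 0 := by simp [Real.pi_ne_zero, Complex.I_ne_zero]
  rw [← inv_smul_smul₀ h2πI (φ 0), ← hcauchy]
  exact F.smul_mem _ hintegral_mem

/-- If `φ : ℂ → E*` is pointwise analytic on the open unit disc, norm-continuous on the
circle of radius `r₀`, and takes values in a norm-closed subspace `F` of the dual on that
circle, then `φ 0 ∈ F`. -/
theorem stmt_0 (E : Type*) [NormedAddCommGroup E] [NormedSpace ℂ E] [CompleteSpace E]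
    (F : Submodule ℂ (E →L[ℂ] ℂ)) (hF : IsClosed (F : Set (E →L[ℂ] ℂ)))
    (r₀ : ℝ) (hr₀ : 0 < r₀) (hr₁ : r₀ < 1)
    (φ : ℂ → (E →L[ℂ] ℂ))
    (hanal : ∀ x : E, DifferentiableOn ℂ (fun z => φ z x) (ball (0 : ℂ) 1))
    (hcont : ContinuousOn φ (sphere (0 : ℂ) r₀))
    (hmem : ∀ z ∈ sphere (0 : ℂ) r₀, φ z ∈ F) :
    φ 0 ∈ F :=
  stmt_0_general E F hF r₀ hr₀ hr₁ φ hanal hcont hmem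
end

section
/- Let A be a unital C*-algebra and let S be a *-subalgebra of A (not necessarily norm-closed). Let φ : A → ℂ be a continuous linear functional such that for every x ∈ S the value φ(x* x) is a nonnegative real number (i.e. its imaginary part is 0 and its real part is ≥ 0). Then for every a ∈ S with 0 ≤ a (positivity in the C*-algebra A), the value φ(a) is a nonnegative real number. -/
open scoped ComplexOrder
/-- If a continuous linear functional on a unital C*-algebra is positive on elements of the
form `x* x` with `x` in a (not necessarily closed) *-subalgebra `S`, then it is positive on
every positive element of `A` belonging to `S`. (The order on `ℂ` is: `0 ≤ z` iff `z` is a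
nonnegative real number.) -/
theorem stmt_8 (A : Type*) [NormedRing A] [StarRing A] [CStarRing A] [CompleteSpace A]
    [NormedAlgebra ℂ A] [StarModule ℂ A] [PartialOrder A] [StarOrderedRing A]
    (S : StarSubalgebra ℂ A)
    (φ : A →L[ℂ] ℂ)
    (hpos : ∀ x ∈ S, 0 ≤ φ (star x * x)) :
    ∀ a ∈ S, 0 ≤ a → 0 ≤ φ a := by
  letI : CStarAlgebra A := ⟨⟩
  letI := Complex.orderClosedTopology
  intro a haS ha
  have hsa : IsSelfAdjoint a := IsSelfAdjoint.of_nonneg ha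
  have hnormal : IsStarNormal a := hsa.isStarNormal
  set f : ℂ → ℂ := fun z => (Real.sqrt z.re : ℂ) with hfdef
  have hfc : Continuous f := by
    have : Continuous fun z : ℂ => Real.sqrt z.re :=
      Real.continuous_sqrt.comp Complex.continuous_re
    exact Complex.continuous_ofReal.comp this
  set b := cfc f a with hbdef
  have hb_sa : star b = b := by
    rw [hbdef, ← cfc_star]
    apply cfc_congr
    intro z _
    simp [f, Complex.conj_ofReal]
  have hb_sq : b * b = a := by
    rw [hbdef, ← cfc_mul f f a hfc.continuousOn hfc.continuousOn]
    conv_rhs => rw [← cfc_id ℂ a hnormal]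
    apply cfc_congr
    intro z hz
    have hz0 : (0 : ℂ) ≤ z := spectrum_nonneg_of_nonneg ha hz
    obtain ⟨hre, him⟩ := Complex.le_def.mp hz0
    simp only [f, id]
    rw [← Complex.ofReal_mul, Real.mul_self_sqrt (by simpa using hre)]
    exact Complex.ext (by simp) (by simpa using him)
  have hb_mem : b ∈ closure (S : Set A) := by
    have h1 : b ∈ StarAlgebra.elemental ℂ a := by
      rw [hbdef, cfc_apply f a hnormal hfc.continuousOn, cfcHom_eq_of_isStarNormal]
      exact SetLike.coe_mem _
    have h2 : StarAlgebra.elemental ℂ a ≤ S.topologicalClosure :=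
      StarAlgebra.elemental.le_of_mem (S.isClosed_topologicalClosure) (subset_closure haS)
    exact h2 h1
  obtain ⟨u, hu_mem, hu_lim⟩ := mem_closure_iff_seq_limit.mp hb_mem
  have htend : Filter.Tendsto (fun n => φ (star (u n) * u n)) Filter.atTop (nhds (φ a)) := by
    have h1 : Filter.Tendsto (fun n => star (u n) * u n) Filter.atTop (nhds (star b * b)) :=
      ((continuous_star.tendsto b).comp hu_lim).mul hu_lim
    rw [hb_sa, hb_sq] at h1
    exact (φ.continuous.tendsto a).comp h1
  exact le_of_tendsto_of_tendsto' tendsto_const_nhds htend fun n => hpos (u n) (hu_mem n)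
end

section
/- Let N be a positive integer and let f : AddCircle (2π) → ℂ be the function induced by the 2π-periodic function g : ℝ → ℂ given on the fundamental domain [0, 2π) by g(θ) = (1 − cos(N·θ)) / (2·N) if 0 ≤ θ ≤ 2π/N and g(θ) = 0 if 2π/N < θ < 2π. Then the family n ↦ ‖fourierCoeff f n‖ · (1 + |n|^{3/2}), indexed by n ∈ ℤ, is summable; i.e. Σ_{n∈ℤ} |f̂_n|(1 + |n|^{3/2}) < ∞. -/
/-!
On `[0, 2π/N]` the function `(1 - cos Nθ)/(2N)` is smooth, and both it and its first derivative
vanish at the two endpoints. Two integrations by parts against `e^{-inθ}` therefore produce no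
boundary terms, and a third one leaves only the endpoint values `N/2` of the second derivative.
Hence `|f̂ₙ| = O(|n|⁻³)`, which makes `Σₙ |f̂ₙ| (1 + |n|^{3/2})` converge.
-/

open Real

open Complex Set Filter MeasureTheory intervalIntegral

theorem norm_exp_ofReal_mul_ofReal_mul_I (k x : ℝ) : ‖exp (k * x * I)‖ = 1 := by
  rw [← ofReal_mul, norm_exp_ofReal_mul_I]

theorem integral_mul_exp_mul_I_eq {a b k : ℝ} (hk : k ≠ 0) {u u' : ℝ → ℂ}
    (hu : ∀ x ∈ uIcc a b, HasDerivAt u (u' x) x) (hu' : IntervalIntegrable u' volume a b) :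
    ∫ x in a..b, u x * exp (k * x * I) =
      (u b * exp (k * b * I) - u a * exp (k * a * I) - ∫ x in a..b, u' x * exp (k * x * I)) /
        (k * I) := by
  have hkI : (k : ℂ) * I ≠ 0 := by simp [hk]
  have hexp (x : ℝ) :
      HasDerivAt (fun y : ℝ => exp (k * y * I) / (k * I)) (exp (k * x * I)) x := by
    have := (((hasDerivAt_id (x : ℂ)).const_mul (k : ℂ)).mul_const I).cexp.comp_ofReal.div_const
      (k * I)
    simp only [id, mul_one] at this
    rwa [mul_div_assoc, div_self hkI, mul_one] at this
  have hcont : Continuous fun x : ℝ => exp (k * x * I) := by fun_prop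
  rw [integral_mul_deriv_eq_deriv_mul hu (fun x _ => hexp x) hu' (hcont.intervalIntegrable a b)]
  simp only [← mul_div_assoc, intervalIntegral.integral_div]
  ring

theorem norm_integral_mul_exp_mul_I_eq_of_eq_zero {a b k : ℝ} (hk : k ≠ 0) {u u' : ℝ → ℂ}
    (hu : ∀ x ∈ uIcc a b, HasDerivAt u (u' x) x) (hu' : IntervalIntegrable u' volume a b)
    (ha : u a = 0) (hb : u b = 0) :
    ‖∫ x in a..b, u x * exp (k * x * I)‖ = ‖∫ x in a..b, u' x * exp (k * x * I)‖ / |k| := by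
  rw [integral_mul_exp_mul_I_eq hk hu hu', ha, hb]
  simp

theorem norm_integral_mul_exp_mul_I_le {a b k M : ℝ} (hk : k ≠ 0) {u u' : ℝ → ℂ}
    (hu : ∀ x ∈ uIcc a b, HasDerivAt u (u' x) x) (hu' : IntervalIntegrable u' volume a b)
    (hM : ∀ x ∈ uIoc a b, ‖u' x‖ ≤ M) :
    ‖∫ x in a..b, u x * exp (k * x * I)‖ ≤ (‖u a‖ + ‖u b‖ + M * |b - a|) / |k| := by
  rw [integral_mul_exp_mul_I_eq hk hu hu', norm_div]
  have hint : ‖∫ x in a..b, u' x * exp (k * x * I)‖ ≤ M * |b - a| :=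
    norm_integral_le_of_norm_le_const fun x hx => by
      simpa [norm_exp_ofReal_mul_ofReal_mul_I] using hM x hx
  have : ‖(k : ℂ) * I‖ = |k| := by simp
  rw [this]
  gcongr
  refine (norm_sub_le _ _).trans (add_le_add ((norm_sub_le _ _).trans ?_) hint)
  simp [norm_exp_ofReal_mul_ofReal_mul_I, add_comm]

theorem hasDerivAt_one_sub_cos_mul_div {c : ℝ} (hc : c ≠ 0) (x : ℝ) :
    HasDerivAt (fun y => (1 - Real.cos (c * y)) / (2 * c)) (Real.sin (c * x) / 2) x :=
  ((((hasDerivAt_id x).const_mul c).cos.const_sub 1).div_const (2 * c)).congr_deriv (by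
    field_simp; simp)

theorem hasDerivAt_sin_mul_div_two (c x : ℝ) :
    HasDerivAt (fun y => Real.sin (c * y) / 2) (c * Real.cos (c * x) / 2) x :=
  (((hasDerivAt_id x).const_mul c).sin.div_const 2).congr_deriv (by simp; ring)

theorem hasDerivAt_mul_cos_mul_div_two (c x : ℝ) :
    HasDerivAt (fun y => c * Real.cos (c * y) / 2) (-(c ^ 2 * Real.sin (c * x)) / 2) x :=
  ((((hasDerivAt_id x).const_mul c).cos.const_mul c).div_const 2).congr_deriv (by simp; ring)

theorem norm_integral_one_sub_cos_mul_exp_le {c k : ℝ} (hc : 0 < c) (hk : k ≠ 0) :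
    ‖∫ x in (0 : ℝ)..2 * π / c, (((1 - Real.cos (c * x)) / (2 * c) : ℝ) : ℂ) * exp (k * x * I)‖ ≤
      c * (1 + π) / |k| ^ 3 := by
  have hcA : c * (2 * π / c) = 2 * π := by field_simp
  have hcont : ∀ (φ : ℝ → ℝ), Continuous φ → ∀ a b : ℝ,
      IntervalIntegrable (fun x => (φ x : ℂ)) volume a b :=
    fun φ hφ a b => (continuous_ofReal.comp hφ).intervalIntegrable a b
  rw [norm_integral_mul_exp_mul_I_eq_of_eq_zero hk
      (fun x _ => (hasDerivAt_one_sub_cos_mul_div hc.ne' x).ofReal_comp)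
      (hcont _ (by fun_prop) _ _) (by simp) (by simp [hcA]),
    norm_integral_mul_exp_mul_I_eq_of_eq_zero hk
      (fun x _ => (hasDerivAt_sin_mul_div_two c x).ofReal_comp)
      (hcont _ (by fun_prop) _ _) (by simp) (by simp [hcA])]
  have hbound := norm_integral_mul_exp_mul_I_le (M := c ^ 2 / 2) (a := 0) (b := 2 * π / c) hk
    (fun x _ => (hasDerivAt_mul_cos_mul_div_two c x).ofReal_comp) (hcont _ (by fun_prop) _ _)
    (fun x _ => by
      rw [norm_real, norm_eq_abs, abs_div, abs_neg, abs_mul, abs_two]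
      gcongr
      simpa using mul_le_of_le_one_right (sq_nonneg c) (abs_sin_le_one (c * x)))
  have hends : ‖((c * Real.cos (c * 0) / 2 : ℝ) : ℂ)‖ +
      ‖((c * Real.cos (c * (2 * π / c)) / 2 : ℝ) : ℂ)‖ + c ^ 2 / 2 * |2 * π / c - 0| =
      c * (1 + π) := by
    rw [hcA]
    simp [abs_of_pos hc, abs_of_pos (by positivity : 0 < 2 * π / c)]
    field_simp
  rw [hends] at hbound
  calc ‖∫ x in (0 : ℝ)..2 * π / c, ((c * Real.cos (c * x) / 2 : ℝ) : ℂ) * exp (k * x * I)‖ /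
        |k| / |k|
      ≤ c * (1 + π) / |k| / |k| / |k| := by gcongr
    _ = c * (1 + π) / |k| ^ 3 := by ring

theorem norm_fourierCoeff_liftIco_le [Fact (0 < 2 * π)] {c : ℝ} (hc : 1 ≤ c) {g : ℝ → ℂ}
    (hg : ∀ θ : ℝ, g θ = if θ ≤ 2 * π / c then (((1 - Real.cos (c * θ)) / (2 * c) : ℝ) : ℂ) else 0)
    {n : ℤ} (hn : n ≠ 0) :
    ‖fourierCoeff (AddCircle.liftIco (2 * π) 0 g) n‖ ≤ c * (1 + π) / (2 * π) / |(n : ℝ)| ^ 3 := by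
  have hc0 : 0 < c := one_pos.trans_le hc
  have hA : 2 * π / c ∈ Icc 0 (0 + 2 * π) :=
    ⟨by positivity, by rw [zero_add]; exact div_le_self (by positivity) hc⟩
  have hintegrand : (fun x : ℝ => fourier (-n) (x : AddCircle (0 + 2 * π - 0)) • g x) =
      {x | x ≤ 2 * π / c}.indicator fun x =>
        (((1 - Real.cos (c * x)) / (2 * c) : ℝ) : ℂ) * exp ((-n : ℤ) * x * I) := by
    ext x
    by_cases hx : x ≤ 2 * π / c
    · rw [indicator_of_mem (show x ∈ {x : ℝ | x ≤ 2 * π / c} from hx), fourier_coe_apply, hg,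
        if_pos hx, smul_eq_mul, mul_comm]
      congr 2
      push_cast
      field_simp
      ring
    · rw [indicator_of_notMem (show x ∉ {x : ℝ | x ≤ 2 * π / c} from hx), hg, if_neg hx, smul_zero]
  rw [fourierCoeff_liftIco_eq, fourierCoeffOn_eq_integral, hintegrand, integral_indicator hA,
    norm_smul]
  calc ‖1 / (0 + 2 * π - 0)‖ * ‖∫ x in (0 : ℝ)..2 * π / c,
        (((1 - Real.cos (c * x)) / (2 * c) : ℝ) : ℂ) * exp (((-n : ℤ) : ℝ) * x * I)‖
      ≤ 1 / (2 * π) * (c * (1 + π) / |((-n : ℤ) : ℝ)| ^ 3) := by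
        simp only [zero_add, sub_zero, norm_div, norm_one, norm_eq_abs, abs_of_pos two_pi_pos]
        gcongr
        exact norm_integral_one_sub_cos_mul_exp_le hc0 (by exact_mod_cast neg_ne_zero.2 hn)
    _ = c * (1 + π) / (2 * π) / |(n : ℝ)| ^ 3 := by
        push_cast
        rw [abs_neg]
        ring

theorem summable_norm_mul_one_add_rpow_of_le {E : Type*} [SeminormedAddCommGroup E] {a : ℤ → E}
    {C s t : ℝ} (ht : 0 ≤ t) (hst : 1 < s - t) (ha : ∀ n ≠ 0, ‖a n‖ ≤ C / |(n : ℝ)| ^ s) :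
    Summable fun n : ℤ => ‖a n‖ * (1 + |(n : ℝ)| ^ t) := by
  refine Summable.of_norm_bounded_eventually ((Real.summable_abs_int_rpow hst).mul_left (2 * C)) ?_
  filter_upwards [eventually_cofinite_ne 0] with n hn
  have hn1 : 1 ≤ |(n : ℝ)| := by exact_mod_cast Int.one_le_abs hn
  have hnt : 1 ≤ |(n : ℝ)| ^ t := Real.one_le_rpow hn1 ht
  have hn0 : 0 < |(n : ℝ)| := one_pos.trans_le hn1
  rw [norm_of_nonneg (by positivity)]
  calc ‖a n‖ * (1 + |(n : ℝ)| ^ t) ≤ C / |(n : ℝ)| ^ s * (2 * |(n : ℝ)| ^ t) := by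
        gcongr
        · exact (norm_nonneg _).trans (ha n hn)
        · exact ha n hn
        · linarith
    _ = 2 * C * |(n : ℝ)| ^ (-(s - t)) := by
        rw [neg_sub, Real.rpow_sub hn0]
        ring

/-- The cut-off piece `g(θ) = (1 − cos(Nθ))/(2N)` on `[0, 2π/N]`, extended by `0` on the
rest of `[0, 2π)` and `2π`-periodically, has Fourier coefficients `f̂ₙ` with
`Σₙ |f̂ₙ|(1 + |n|^{3/2}) < ∞`. -/
theorem stmt_11 (N : ℕ) (hN : 0 < N) [Fact (0 < 2 * π)]
    (g : ℝ → ℂ)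
    (hg : ∀ θ : ℝ, g θ = if θ ≤ 2 * π / N
      then (((1 - Real.cos (N * θ)) / (2 * N) : ℝ) : ℂ) else 0)
    (f : AddCircle (2 * π) → ℂ)
    (hf : f = AddCircle.liftIco (2 * π) 0 g) :
    Summable (fun n : ℤ => ‖fourierCoeff f n‖ * (1 + |(n : ℝ)| ^ (3 / 2 : ℝ))) := by
  subst hf
  refine summable_norm_mul_one_add_rpow_of_le (C := N * (1 + π) / (2 * π)) (s := 3)
    (by norm_num) (by norm_num) fun n hn => ?_
  rw [Real.rpow_ofNat]
  exact norm_fourierCoeff_liftIco_le (by exact_mod_cast hN) hg hn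
end
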